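/- There exists a family of Boolean functions (f_n)_{n∈ℕ}, f_n : {0,1}^n × {0,1}^n → {0,1}, such that the randomized garden-hose complexity GH_{ε(n)}(f_n) with ε(n) = 1/2 − 1/n is not bounded above by any polynomial in n (indeed it is exponential in n). -/

import Mathlib

/-- A partial matching on the vertex type `V`, encoded by a partner function:
`m i = some j` means that there is an edge between `i` and `j`;
the graph `{ {i,j} | m i = some j }` then has maximum degree at most `1`
and no self-loops. -/
def IsPartialMatching {V : Type*} (m : V → Option V) : Prop :=
  ∀ i j, m i = some j → i ≠ j ∧ m j = some i

/-- The position of the water in a garden-hose game with `s` pipes: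
`atAlice i` (resp. `atBob i`) means the water has just arrived at Alice's
(resp. Bob's) end of pipe `i`; `exitA` / `exitB` mean the water has exited
on Alice's / Bob's side, i.e. the maximal path starting at the tap has ended
in `A∘` / in `B`. -/
inductive GHState (s : ℕ) where
  | atAlice : Fin s → GHState s
  | atBob : Fin s → GHState s
  | exitA : GHState s
  | exitB : GHState s
  deriving DecidableEq

/-- Vertex `k` of `A∘ = {0, 1, ..., s}` viewed as a pipe: vertex `0` is the water
tap (no pipe), and vertex `i + 1` is Alice's end of pipe `i`. -/
def toPipe {s : ℕ} (k : Fin (s + 1)) : Option (Fin s) :=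
  if h : (k : ℕ) = 0 then none
  else some ⟨(k : ℕ) - 1, by have := k.isLt; omega⟩

/-- One step of the water flow, given Alice's connections `a` on `A∘ = {0,...,s}`
and Bob's connections `b` on `B = {1,...,s}` (indexed by pipes `Fin s`). -/
def ghStep {s : ℕ} (a : Fin (s + 1) → Option (Fin (s + 1)))
    (b : Fin s → Option (Fin s)) : GHState s → GHState s
  | GHState.atAlice i =>
    match a i.succ with
    | none => GHState.exitA
    | some k =>
      match toPipe k with
      | none => GHState.exitA
      | some p => GHState.atBob p
  | GHState.atBob i =>
    match b i with
    | none => GHState.exitB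
    | some j => GHState.atAlice j
  | GHState.exitA => GHState.exitA
  | GHState.exitB => GHState.exitB

/-- The start of the water flow: the tap (vertex `0` of `A∘`) is connected by
Alice to at most one pipe. -/
def ghStart {s : ℕ} (a : Fin (s + 1) → Option (Fin (s + 1))) : GHState s :=
  match a 0 with
  | none => GHState.exitA
  | some k =>
    match toPipe k with
    | none => GHState.exitA
    | some p => GHState.atBob p

/-- The endpoint of the maximal path `π(x,y)` starting at the tap: since the graph
has maximum degree `2` and the path is simple, it is reached after at most
`2s + 2` steps. -/
def ghResult {s : ℕ} (a : Fin (s + 1) → Option (Fin (s + 1)))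
    (b : Fin s → Option (Fin s)) : GHState s :=
  (ghStep a b)^[2 * s + 2] (ghStart a)

/-- A garden-hose game of size `s` on inputs `{0,1}^n × {0,1}^n`: for every input
`x` Alice chooses a partial matching `EA x` on `A∘ = {0,1,…,s}` and for every
input `y` Bob chooses a partial matching `EB y` on `B = {1,…,s}`. -/
structure GHGame (n s : ℕ) where
  EA : (Fin n → Bool) → Fin (s + 1) → Option (Fin (s + 1))
  EB : (Fin n → Bool) → Fin s → Option (Fin s)
  matchA : ∀ x, IsPartialMatching (EA x)
  matchB : ∀ y, IsPartialMatching (EB y)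

/-- Where the water exits on input `(x, y)`. -/
def GHGame.run {n s : ℕ} (G : GHGame n s) (x y : Fin n → Bool) : GHState s :=
  ghResult (G.EA x) (G.EB y)

/-- The game `G` computes `f` if for all inputs the maximal path from the tap ends
in `A∘` whenever `f x y = 0` (water exits on Alice's side) and in `B` whenever
`f x y = 1` (water exits on Bob's side). -/
def GHGame.Computes {n s : ℕ} (G : GHGame n s)
    (f : (Fin n → Bool) → (Fin n → Bool) → Bool) : Prop :=
  ∀ x y, G.run x y = if f x y then GHState.exitB else GHState.exitA

/-- The garden-hose complexity of `f`: the minimal number of pipes of a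
garden-hose game computing `f`. -/
noncomputable def GH {n : ℕ} (f : (Fin n → Bool) → (Fin n → Bool) → Bool) : ℕ :=
  sInf {s : ℕ | ∃ G : GHGame n s, G.Computes f}
/-- A randomized garden-hose protocol of size `s` for `f` with error `ε`:
a finite set (indexed by `Fin k`) equipped with a probability distribution
`prob` and, for each random string `r`, a garden-hose game `game r` of size `s`
such that for every input `(x, y)` the probability over `r` that `game r`
computes the value `f x y` at `(x, y)` is at least `1 - ε`. -/
structure RandGHProtocol (n s : ℕ) (f : (Fin n → Bool) → (Fin n → Bool) → Bool)
    (ε : ℝ) where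
  k : ℕ
  prob : Fin k → ℝ
  prob_nonneg : ∀ r, 0 ≤ prob r
  prob_sum : ∑ r, prob r = 1
  game : Fin k → GHGame n s
  correct : ∀ x y, 1 - ε ≤ ∑ r,
    if (game r).run x y = (if f x y then GHState.exitB else GHState.exitA)
    then prob r else 0

/-- The randomized garden-hose complexity `GH_ε(f)`: the minimal size of a
randomized garden-hose protocol for `f` with error `ε`. -/
noncomputable def GHr {n : ℕ} (ε : ℝ)
    (f : (Fin n → Bool) → (Fin n → Bool) → Bool) : ℕ :=
  sInf {s : ℕ | Nonempty (RandGHProtocol n s f ε)}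

/-!
A randomized protocol of size `s` and error `1/2 - 1/n` has advantage `1/n` on every input, so by
Hoeffding's inequality and a union bound over the `4^n` inputs there are `n^3` random strings
whose games, combined by majority vote, compute `f` exactly. Hence every such `f` is the majority
function of an `n^3`-tuple of deterministic games of size `s`. There are fewer than
`2^(n + 2 n^4 S 2^n)` such tuples with `s < S`, but `2^(4^n)` functions, so as soon as
`2 n^4 S < 2^n` some `f` needs size at least `S`, which can be taken exponential in `n`. A trivial
game with `2^(n+1)` pipes computes any `f`, so the infimum defining `GHr` is not the junk value
`sInf ∅ = 0`.
-/

open Finset Filter MeasureTheory ProbabilityTheory Real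

def involutionMatching {V : Type*} [DecidableEq V] (σ : V → V) : V → Option V :=
  fun v => if σ v = v then none else some (σ v)

theorem isPartialMatching_involutionMatching {V : Type*} [DecidableEq V] {σ : V → V}
    (hσ : Function.Involutive σ) : IsPartialMatching (involutionMatching σ) := by
  intro i j hij
  unfold involutionMatching at hij ⊢
  split_ifs at hij with hi
  cases hij
  exact ⟨fun h => hi h.symm, by rw [hσ i, if_neg fun h => hi h.symm]⟩

theorem toPipe_succ {s : ℕ} (i : Fin s) : toPipe i.succ = some i := by
  simp [toPipe]

theorem ghResult_eq_of_iterate_eq {s : ℕ} {a : Fin (s + 1) → Option (Fin (s + 1))}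
    {b : Fin s → Option (Fin s)} {j : ℕ} {z : GHState s} (hz : ghStep a b z = z)
    (hj : j ≤ 2 * s + 2) (h : (ghStep a b)^[j] (ghStart a) = z) : ghResult a b = z := by
  obtain ⟨d, hd⟩ := Nat.exists_eq_add_of_le hj
  rw [ghResult, hd, add_comm, Function.iterate_add_apply, h, Function.iterate_fixed hz]

namespace GHGame

variable {n s m : ℕ}

/-- Pipes are indexed by `(x', b)`. Alice with input `x` joins the tap to pipe `(x, false)`;
Bob with input `y` leaves pipe `(x', false)` open if `f x' y`, and otherwise sends the water back
through pipe `(x', true)`, whose end Alice leaves open. -/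
noncomputable def ofFun (f : (Fin n → Bool) → (Fin n → Bool) → Bool) :
    GHGame n (Fintype.card ((Fin n → Bool) × Bool)) :=
  let pipe := Fintype.equivFin ((Fin n → Bool) × Bool)
  let loop (y : Fin n → Bool) (q : (Fin n → Bool) × Bool) := if f q.1 y then q else (q.1, !q.2)
  { EA := fun x => involutionMatching (Equiv.swap 0 (pipe (x, false)).succ)
    EB := fun y => involutionMatching (pipe ∘ loop y ∘ pipe.symm)
    matchA := fun _ => isPartialMatching_involutionMatching fun _ => Equiv.swap_apply_self _ _ _
    matchB := fun y => isPartialMatching_involutionMatching fun v => by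
      by_cases h : f (pipe.symm v).1 y <;> simp [loop, h] }

theorem ofFun_computes (f : (Fin n → Bool) → (Fin n → Bool) → Bool) : (ofFun f).Computes f := by
  intro x y
  apply ghResult_eq_of_iterate_eq (j := 3)
  · cases f x y <;> rfl
  · have : 0 < Fintype.card ((Fin n → Bool) × Bool) := Fintype.card_pos
    omega
  · cases hf : f x y <;>
      simp [ofFun, ghStep, ghStart, involutionMatching, hf, toPipe_succ,
        Equiv.swap_apply_of_ne_of_ne]

def majority (games : Fin m → GHGame n s) (x y : Fin n → Bool) : Bool :=
  decide (m < 2 * #{i | (games i).run x y = .exitB})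

theorem majority_eq_of_lt {games : Fin m → GHGame n s}
    {f : (Fin n → Bool) → (Fin n → Bool) → Bool}
    (h : ∀ x y, m < 2 * #{i | (games i).run x y = if f x y then .exitB else .exitA}) :
    majority games = f := by
  funext x y
  specialize h x y
  cases hf : f x y
  · simp only [hf, Bool.false_eq_true, if_false] at h
    have hA : #{i | (games i).run x y = .exitA} ≤ #{i | ¬ (games i).run x y = .exitB} :=
      card_le_card (monotone_filter_right _ fun _ _ hi => by rw [hi]; exact nofun)
    have hAB := card_filter_add_card_filter_not (s := univ) fun i => (games i).run x y = .exitB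
    simp only [card_univ, Fintype.card_fin] at hAB
    simp only [majority, decide_eq_false_iff_not]
    omega
  · simpa [majority, hf] using h

theorem toPair_injective : Function.Injective fun G : GHGame n s => (G.EA, G.EB) := by
  rintro ⟨_, _, _, _⟩ ⟨_, _, _, _⟩ h
  simp only [Prod.mk.injEq] at h
  obtain ⟨rfl, rfl⟩ := h
  rfl

instance : Finite (GHGame n s) := Finite.of_injective _ toPair_injective

theorem card_le : Nat.card (GHGame n s) ≤ (s + 2) ^ ((2 * s + 1) * 2 ^ n) :=
  calc Nat.card (GHGame n s)
      ≤ Nat.card (((Fin n → Bool) → Fin (s + 1) → Option (Fin (s + 1))) ×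
          ((Fin n → Bool) → Fin s → Option (Fin s))) :=
        Nat.card_le_card_of_injective _ toPair_injective
    _ = ((s + 2) ^ (s + 1)) ^ 2 ^ n * ((s + 1) ^ s) ^ 2 ^ n := by simp
    _ ≤ ((s + 2) ^ (s + 1)) ^ 2 ^ n * ((s + 2) ^ s) ^ 2 ^ n := by gcongr; omega
    _ = (s + 2) ^ ((2 * s + 1) * 2 ^ n) := by
        rw [← pow_mul, ← pow_mul, ← pow_add]; ring_nf

end GHGame

namespace RandGHProtocol

variable {n s : ℕ} {f : (Fin n → Bool) → (Fin n → Bool) → Bool}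

def ofComputes {ε : ℝ} (G : GHGame n s) (hG : G.Computes f) (hε : 0 ≤ ε) :
    RandGHProtocol n s f ε where
  k := 1
  prob _ := 1
  prob_nonneg _ := zero_le_one
  prob_sum := by simp
  game _ := G
  correct x y := by simp [hG x y, hε]

end RandGHProtocol

theorem measureReal_pi_mean_sub_sum_ge_le {R : Type*} [MeasurableSpace R]
    [DiscreteMeasurableSpace R] (ν : Measure R) [IsProbabilityMeasure ν] (g : R → ℝ)
    (hg : ∀ r, g r ∈ Set.Icc 0 1) {γ : ℝ} (hγ : 0 ≤ γ) (m : ℕ) :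
    (Measure.pi fun _ : Fin m => ν).real {σ | γ * m ≤ ∑ i, (ν[g] - g (σ i))} ≤
      exp (-(2 * γ ^ 2 * m)) := by
  have hsub : HasSubgaussianMGF (fun r => ν[g] - g r) (1 / 4) ν := by
    have h := hasSubgaussianMGF_of_mem_Icc (μ := ν) (X := fun r => -g r) (a := -1) (b := 0)
      Measurable.of_discrete.aemeasurable (ae_of_all _ fun r => by simp [(hg r).1, (hg r).2])
    convert h using 1
    · ext r; rw [integral_neg]; ring
    · ext; norm_num
  have hsample : ∀ i, HasSubgaussianMGF (fun σ : Fin m → R => ν[g] - g (σ i)) (1 / 4)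
      (Measure.pi fun _ => ν) :=
    fun i => .of_map (μ := Measure.pi fun _ => ν) (X := fun r => ∫ x, g x ∂ν - g r)
      (Y := fun σ => σ i)
      (measurable_pi_apply i).aemeasurable
      (by rwa [(measurePreserving_eval (fun _ => ν) i).map_eq])
  calc (Measure.pi fun _ : Fin m => ν).real {σ | γ * m ≤ ∑ i, (ν[g] - g (σ i))}
      ≤ exp (-(γ * m) ^ 2 / (2 * ((∑ _i : Fin m, (1 / 4 : NNReal) : NNReal) : ℝ))) :=
        HasSubgaussianMGF.measure_sum_ge_le_of_iIndepFun
          (iIndepFun_pi (μ := fun _ => ν) (X := fun _ r => ν[g] - g r)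
            fun _ => Measurable.of_discrete.aemeasurable)
          (fun i _ => hsample i) (mul_nonneg hγ m.cast_nonneg)
    _ = exp (-(2 * γ ^ 2 * m)) := by
        rcases Nat.eq_zero_or_pos m with rfl | hm
        · simp
        · rw [sum_const, card_univ, Fintype.card_fin, nsmul_eq_mul]
          push_cast
          congr 1
          field_simp
          ring

theorem exists_sample_forall_lt_sum {R I : Type*} [Fintype R] [Fintype I]
    (p : R → ℝ) (hp0 : ∀ r, 0 ≤ p r) (hp1 : ∑ r, p r = 1)
    (c : R → I → ℝ) (hc : ∀ r t, c r t ∈ Set.Icc 0 1) {γ : ℝ} (hγ : 0 ≤ γ) (m : ℕ)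
    (hI : (Fintype.card I : ℝ) < exp (2 * γ ^ 2 * m)) :
    ∃ σ : Fin m → R, ∀ t, (∑ r, p r * c r t - γ) * m < ∑ i, c (σ i) t := by
  let _ : MeasurableSpace R := ⊤
  let ν : Measure R := (PMF.ofFintype (fun r => ENNReal.ofReal (p r))
    (by rw [← ENNReal.ofReal_sum_of_nonneg fun r _ => hp0 r, hp1, ENNReal.ofReal_one])).toMeasure
  have hmean : ∀ t, ν[fun r => c r t] = ∑ r, p r * c r t := fun t => by
    simp [ν, PMF.integral_eq_sum, ENNReal.toReal_ofReal (hp0 _)]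
  let bad : I → Set (Fin m → R) := fun t =>
    {σ | γ * m ≤ ∑ i, (ν[fun r => c r t] - c (σ i) t)}
  have hunion : (Measure.pi fun _ => ν).real (⋃ t, bad t) < 1 := by
    calc (Measure.pi fun _ => ν).real (⋃ t, bad t)
        ≤ ∑ t, (Measure.pi fun _ => ν).real (bad t) := measureReal_iUnion_fintype_le _
      _ ≤ ∑ _t : I, exp (-(2 * γ ^ 2 * m)) := sum_le_sum fun t _ =>
          measureReal_pi_mean_sub_sum_ge_le ν (fun r => c r t) (fun r => hc r t) hγ m
      _ < 1 := by
          rw [sum_const, card_univ, nsmul_eq_mul, exp_neg, ← div_eq_mul_inv,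
            div_lt_one (exp_pos _)]
          exact hI
  obtain ⟨σ, hσ⟩ : ∃ σ, σ ∉ ⋃ t, bad t := by
    by_contra! h
    rw [Set.eq_univ_of_forall h, probReal_univ] at hunion
    exact lt_irrefl _ hunion
  refine ⟨σ, fun t => ?_⟩
  have ht : σ ∉ bad t := fun h => hσ (Set.mem_iUnion.mpr ⟨t, h⟩)
  simp only [bad, Set.mem_ofPred_eq, hmean, sum_sub_distrib, sum_const, card_univ,
    Fintype.card_fin, nsmul_eq_mul, not_le] at ht
  linarith

theorem RandGHProtocol.exists_majority_eq {n s : ℕ}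
    {f : (Fin n → Bool) → (Fin n → Bool) → Bool} {γ : ℝ} (P : RandGHProtocol n s f (1 / 2 - γ))
    (hγ : 0 ≤ γ) (m : ℕ) (hm : (4 : ℝ) ^ n < exp (2 * γ ^ 2 * m)) :
    ∃ games : Fin m → GHGame n s, GHGame.majority games = f := by
  let correct : Fin P.k → (Fin n → Bool) × (Fin n → Bool) → ℝ := fun r xy =>
    if (P.game r).run xy.1 xy.2 = if f xy.1 xy.2 then .exitB else .exitA then 1 else 0
  have hcard : (Fintype.card ((Fin n → Bool) × (Fin n → Bool)) : ℝ) = 4 ^ n := by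
    simp [← mul_pow]
  obtain ⟨σ, hσ⟩ := exists_sample_forall_lt_sum P.prob P.prob_nonneg P.prob_sum correct
    (fun r xy => by unfold correct; split_ifs <;> simp) hγ m (hcard ▸ hm)
  refine ⟨P.game ∘ σ, GHGame.majority_eq_of_lt fun x y => ?_⟩
  have hP : 1 / 2 + γ ≤ ∑ r, P.prob r * correct r (x, y) := by
    have := P.correct x y
    simp only [correct, mul_ite, mul_one, mul_zero]
    linarith
  have hσxy := hσ (x, y)
  simp only [correct, sum_boole] at hσxy
  have : (m : ℝ) < 2 * #{i | (P.game (σ i)).run x y = if f x y then .exitB else .exitA} := by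
    nlinarith
  exact_mod_cast this

theorem exists_forall_notMem_range {ι β : Type*} {α : ι → Type*} [Finite β] [∀ i, Finite (α i)]
    (s : Finset ι) (g : ∀ i, α i → β) (h : ∑ i ∈ s, Nat.card (α i) < Nat.card β) :
    ∃ b, ∀ i ∈ s, b ∉ Set.range (g i) := by
  by_contra! hcov
  have hsurj : Function.Surjective fun p : Σ i : s, α i => g p.1 p.2 := fun b => by
    obtain ⟨i, hi, a, rfl⟩ := hcov b
    exact ⟨⟨⟨i, hi⟩, a⟩, rfl⟩
  have := Nat.card_le_card_of_surjective _ hsurj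
  rw [Nat.card_sigma, sum_coe_sort s fun i => Nat.card (α i)] at this
  omega

theorem sum_card_game_tuples_lt_card {n S : ℕ} (hn : 1 ≤ n) (hS : 2 * n ^ 4 * S < 2 ^ n) :
    ∑ s ∈ range S, Nat.card (Fin (n ^ 3) → GHGame n s) <
      Nat.card ((Fin n → Bool) → (Fin n → Bool) → Bool) := by
  have hS2 : 2 * S < 2 ^ n := lt_of_le_of_lt (by nlinarith [Nat.one_le_pow 4 n hn]) hS
  have hterm : ∀ s ∈ range S,
      Nat.card (Fin (n ^ 3) → GHGame n s) ≤ 2 ^ (2 * n ^ 4 * S * 2 ^ n) := by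
    intro s hs
    have hs : s < S := mem_range.1 hs
    rw [Nat.card_fun, Nat.card_fin]
    calc Nat.card (GHGame n s) ^ n ^ 3
        ≤ ((s + 2) ^ ((2 * s + 1) * 2 ^ n)) ^ n ^ 3 := by gcongr; exact GHGame.card_le
      _ ≤ ((2 ^ n) ^ ((2 * s + 1) * 2 ^ n)) ^ n ^ 3 := by gcongr; omega
      _ = 2 ^ ((2 * s + 1) * n ^ 4 * 2 ^ n) := by rw [← pow_mul, ← pow_mul]; ring_nf
      _ ≤ 2 ^ (2 * n ^ 4 * S * 2 ^ n) := by
          gcongr 2 ^ ?_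
          · norm_num
          · calc (2 * s + 1) * n ^ 4 * 2 ^ n ≤ 2 * S * n ^ 4 * 2 ^ n := by gcongr; omega
              _ = 2 * n ^ 4 * S * 2 ^ n := by ring
  calc ∑ s ∈ range S, Nat.card (Fin (n ^ 3) → GHGame n s)
      ≤ S * 2 ^ (2 * n ^ 4 * S * 2 ^ n) := by
        simpa using sum_le_card_nsmul _ _ _ hterm
    _ < 2 ^ n * 2 ^ (2 * n ^ 4 * S * 2 ^ n) := by gcongr; omega
    _ ≤ 2 ^ (2 ^ n * 2 ^ n) := by
        rw [← pow_add]
        gcongr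
        · norm_num
        · nlinarith [Nat.lt_two_pow_self (n := n)]
    _ = Nat.card ((Fin n → Bool) → (Fin n → Bool) → Bool) := by simp [← pow_mul]

theorem exists_forall_isEmpty_randGHProtocol {n S : ℕ} (hn : 1 ≤ n)
    (hS : 2 * n ^ 4 * S < 2 ^ n) :
    ∃ f : (Fin n → Bool) → (Fin n → Bool) → Bool,
      ∀ s < S, IsEmpty (RandGHProtocol n s f (1 / 2 - 1 / n)) := by
  obtain ⟨f, hf⟩ := exists_forall_notMem_range (range S)
    (fun s => GHGame.majority (n := n) (s := s) (m := n ^ 3)) (sum_card_game_tuples_lt_card hn hS)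
  refine ⟨f, fun s hs => ⟨fun P => hf s (mem_range.2 hs) ?_⟩⟩
  have hexp : (4 : ℝ) ^ n < exp (2 * (1 / n) ^ 2 * ↑(n ^ 3)) := by
    have hn' : (n : ℝ) ≠ 0 := by positivity
    calc (4 : ℝ) ^ n < exp 2 ^ n := by
          gcongr
          have := exp_one_gt_two
          rw [show (2 : ℝ) = 1 + 1 by norm_num, exp_add]
          nlinarith
      _ = exp (2 * (1 / n) ^ 2 * ↑(n ^ 3)) := by
          rw [← exp_nat_mul]; push_cast; field_simp
  exact P.exists_majority_eq (by positivity) (n ^ 3) hexp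

theorem le_GHr_of_forall_lt_isEmpty {n s S : ℕ} {f : (Fin n → Bool) → (Fin n → Bool) → Bool}
    {ε : ℝ} (P : RandGHProtocol n s f ε) (h : ∀ s < S, IsEmpty (RandGHProtocol n s f ε)) :
    S ≤ GHr ε f :=
  le_csInf ⟨s, ⟨P⟩⟩ fun _ hs => not_lt.1 fun hlt => (h _ hlt).false hs.some

theorem exists_le_GHr {n S : ℕ} (hn : 2 ≤ n) (hS : 2 * n ^ 4 * S < 2 ^ n) :
    ∃ f : (Fin n → Bool) → (Fin n → Bool) → Bool, S ≤ GHr (1 / 2 - 1 / n) f := by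
  obtain ⟨f, hf⟩ := exists_forall_isEmpty_randGHProtocol (by omega) hS
  have hε : (0 : ℝ) ≤ 1 / 2 - 1 / n := by
    have : (2 : ℝ) ≤ n := by exact_mod_cast hn
    rw [sub_nonneg]; gcongr
  exact ⟨f, le_GHr_of_forall_lt_isEmpty
    (RandGHProtocol.ofComputes _ (GHGame.ofFun_computes f) hε) hf⟩

theorem eventually_mul_ceil_pow_lt_two_pow {a : ℝ} (ha1 : 1 ≤ a) (ha2 : a < 2) :
    ∀ᶠ n : ℕ in atTop, 2 * n ^ 4 * ⌈a ^ n⌉₊ < 2 ^ n := by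
  have hlim := tendsto_pow_const_mul_const_pow_of_abs_lt_one 4
    (r := a / 2) (by rw [abs_lt]; constructor <;> linarith)
  filter_upwards [hlim.eventually_lt_const (by norm_num : (0 : ℝ) < 1 / 4)] with n hn
  have hceil : (⌈a ^ n⌉₊ : ℝ) < 2 * a ^ n := by
    have := Nat.ceil_lt_add_one (pow_nonneg (by linarith : (0 : ℝ) ≤ a) n)
    nlinarith [one_le_pow₀ (n := n) ha1]
  have h2a : (2 : ℝ) ^ n * (a / 2) ^ n = a ^ n := by rw [← mul_pow]; field_simp
  have : (2 * n ^ 4 * ⌈a ^ n⌉₊ : ℝ) < 2 ^ n := by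
    calc (2 * n ^ 4 * ⌈a ^ n⌉₊ : ℝ) ≤ 2 * n ^ 4 * (2 * a ^ n) := by gcongr
      _ = 4 * 2 ^ n * (n ^ 4 * (a / 2) ^ n) := by rw [← h2a]; ring
      _ < 4 * 2 ^ n * (1 / 4) := by gcongr
      _ = 2 ^ n := by ring
  exact_mod_cast this

theorem exists_eval_lt_of_eventually_pow_le {g : ℕ → ℕ} {a : ℝ} (ha : 1 < a)
    (hg : ∀ᶠ n in atTop, a ^ n ≤ g n) (q : Polynomial ℕ) : ∃ n, q.eval n < g n := by
  let Q := q.map (Nat.castRingHom ℝ)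
  have hQ : (fun n : ℕ => Q.eval (n : ℝ)) =o[atTop] fun n => a ^ n :=
    ((Polynomial.isBigO_atTop_of_degree_le (P := Q) (Q := Polynomial.X ^ Q.natDegree)
      (by simp [Polynomial.degree_le_natDegree])).comp_tendsto
        tendsto_natCast_atTop_atTop).trans_isLittleO
      (by simpa [Function.comp_def] using isLittleO_pow_const_const_pow_of_one_lt Q.natDegree ha)
  obtain ⟨n, hQn, hgn⟩ := ((hQ.def one_half_pos).and hg).exists
  refine ⟨n, ?_⟩
  have hpos : 0 < a ^ n := pow_pos (by linarith) n
  rw [Real.norm_eq_abs, Real.norm_eq_abs, abs_of_pos hpos, Polynomial.eval_natCast_map,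
    Nat.coe_castRingHom, Nat.cast_id] at hQn
  have : ((q.eval n : ℕ) : ℝ) < g n := by
    linarith [le_abs_self ((q.eval n : ℕ) : ℝ)]
  exact_mod_cast this

/-- There exists a family of Boolean functions `f_n` whose randomized
garden-hose complexity with error `ε(n) = 1/2 - 1/n` is not bounded above by
any polynomial in `n`; indeed it is exponential in `n`. -/
theorem exists_ghr_exponential_family :
    ∃ f : ∀ n : ℕ, (Fin n → Bool) → (Fin n → Bool) → Bool,
      (∀ q : Polynomial ℕ, ∃ n : ℕ,
        q.eval n < GHr ((1 : ℝ) / 2 - 1 / (n : ℝ)) (f n)) ∧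
      ∃ a : ℝ, 1 < a ∧ ∃ N : ℕ, ∀ n : ℕ, N ≤ n →
        a ^ n ≤ (GHr ((1 : ℝ) / 2 - 1 / (n : ℝ)) (f n) : ℝ) := by
  have key : ∀ n : ℕ, ∃ f : (Fin n → Bool) → (Fin n → Bool) → Bool,
      2 ≤ n → 2 * n ^ 4 * ⌈(3 / 2 : ℝ) ^ n⌉₊ < 2 ^ n →
        ⌈(3 / 2 : ℝ) ^ n⌉₊ ≤ GHr ((1 : ℝ) / 2 - 1 / (n : ℝ)) f := fun n => by
    by_cases h : 2 ≤ n ∧ 2 * n ^ 4 * ⌈(3 / 2 : ℝ) ^ n⌉₊ < 2 ^ n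
    · obtain ⟨f, hf⟩ := exists_le_GHr h.1 h.2
      exact ⟨f, fun _ _ => hf⟩
    · exact ⟨fun _ _ => false, fun h1 h2 => absurd ⟨h1, h2⟩ h⟩
  choose f hf using key
  have hexp : ∀ᶠ n : ℕ in atTop, (3 / 2 : ℝ) ^ n ≤ GHr ((1 : ℝ) / 2 - 1 / (n : ℝ)) (f n) := by
    filter_upwards [eventually_ge_atTop 2,
      eventually_mul_ceil_pow_lt_two_pow (a := 3 / 2) (by norm_num) (by norm_num)] with n h2 hn
    exact (Nat.le_ceil _).trans (by exact_mod_cast hf n h2 hn)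
  exact ⟨f, exists_eval_lt_of_eventually_pow_le (by norm_num) hexp, 3 / 2, by norm_num,
    eventually_atTop.1 hexp⟩
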